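/- arXiv:2512.03225 — 4 statements merged into one kernel-verified Lean document; each statement's English description precedes it below -/
import Mathlib

section
/- Let (a_n) be a real sequence bounded below, (b_n) a sequence of nonnegative reals, and (ε_n), (ρ_n) bounded sequences of nonnegative reals such that ρ_n/ε_n → 0 and ∑ ε_n = ∞. If a_{n+1} ≤ a_n − ε_n b_n + ρ_n for all n ≥ 1, then liminf_{n→∞} b_n = 0. -/
/-!
If `b n ≥ c > 0` for all large `n`, then eventually `ρ n ≤ (c / 2) ε n`, so the recursion gives
`a (n + 1) ≤ a n - (c / 2) ε n`. Telescoping, `a` then decreases by `(c / 2) ∑ ε = ∞`, which is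
impossible for a sequence bounded below. Hence `b n < c` infinitely often for every `c > 0`.
-/

open Filter Finset

theorem add_sum_Ico_le_of_forall_succ_le_sub {a d : ℕ → ℝ} {N : ℕ}
    (h : ∀ n ≥ N, a (n + 1) ≤ a n - d n) : ∀ n ≥ N, a n + ∑ i ∈ Ico N n, d i ≤ a N := by
  intro n hn
  induction n, hn using Nat.le_induction with
  | base => simp
  | succ n hn ih =>
    rw [sum_Ico_succ_top hn]
    linarith [h n hn]

theorem not_eventually_succ_le_sub_of_bddBelow {a d : ℕ → ℝ} (ha : BddBelow (Set.range a))
    (hd : Tendsto (fun N => ∑ n ∈ range N, d n) atTop atTop) :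
    ¬ ∀ᶠ n in atTop, a (n + 1) ≤ a n - d n := by
  intro h
  obtain ⟨m, hm⟩ := ha
  obtain ⟨N, hN⟩ := eventually_atTop.mp h
  obtain ⟨n, hn_large, hnN⟩ :=
    ((hd.eventually_gt_atTop (a N - m + ∑ i ∈ range N, d i)).and (eventually_ge_atTop N)).exists
  have h_tel := add_sum_Ico_le_of_forall_succ_le_sub hN n hnN
  rw [← sum_range_add_sum_Ico d hnN] at hn_large
  linarith [hm (Set.mem_range_self n)]

theorem liminf_eq_zero_of_frequently_lt {α : Type*} {f : Filter α} {b : α → ℝ}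
    (hb : ∀ x, 0 ≤ b x) (h : ∀ c > 0, ∃ᶠ x in f, b x < c) : liminf b f = 0 := by
  have hbdd : IsBoundedUnder (· ≥ ·) f b := isBoundedUnder_of ⟨0, hb⟩
  have hcobdd : IsCoboundedUnder (· ≥ ·) f b :=
    IsCoboundedUnder.of_frequently_le ((h 1 one_pos).mono fun _ hx => hx.le)
  refine le_antisymm (le_of_forall_pos_le_add fun δ hδ => ?_)
    (le_liminf_of_le hcobdd (.of_forall hb))
  simpa using liminf_le_of_frequently_le ((h δ hδ).mono fun _ hx => hx.le) hbdd

theorem eventually_succ_le_sub_of_le_of_recursion {a b ε ρ : ℕ → ℝ} {c : ℝ} (hc : 0 < c)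
    (hε : ∀ n, 0 < ε n) (hratio : Tendsto (fun n => ρ n / ε n) atTop (nhds 0))
    (hrec : ∀ n, 1 ≤ n → a (n + 1) ≤ a n - ε n * b n + ρ n) (hbc : ∀ᶠ n in atTop, c ≤ b n) :
    ∀ᶠ n in atTop, a (n + 1) ≤ a n - c / 2 * ε n := by
  filter_upwards [hbc, hratio.eventually_lt_const (half_pos hc), eventually_ge_atTop 1]
    with n hbn hρn hn
  have hρn : ρ n ≤ c / 2 * ε n := by
    rw [div_lt_iff₀ (hε n)] at hρn
    exact hρn.le
  nlinarith [hrec n hn, hε n]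

theorem stmt0_general (a b ε ρ : ℕ → ℝ)
    (ha : BddBelow (Set.range a))
    (hb : ∀ n, 0 ≤ b n)
    (hε : ∀ n, 0 < ε n)
    (hratio : Tendsto (fun n => ρ n / ε n) atTop (nhds 0))
    (hdiv : Tendsto (fun N => ∑ n ∈ Finset.range N, ε n) atTop atTop)
    (hrec : ∀ n, 1 ≤ n → a (n + 1) ≤ a n - ε n * b n + ρ n) :
    liminf b atTop = 0 := by
  refine liminf_eq_zero_of_frequently_lt hb fun c hc => ?_
  by_contra h
  have hbc : ∀ᶠ n in atTop, c ≤ b n := (not_frequently.mp h).mono fun _ => le_of_not_gt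
  have hdiv' : Tendsto (fun N => ∑ n ∈ range N, c / 2 * ε n) atTop atTop := by
    simpa only [← mul_sum] using hdiv.const_mul_atTop (half_pos hc)
  exact not_eventually_succ_le_sub_of_bddBelow ha hdiv'
    (eventually_succ_le_sub_of_le_of_recursion hc hε hratio hrec hbc)

theorem stmt0 (a b ε ρ : ℕ → ℝ)
    (ha : BddBelow (Set.range a))
    (hb : ∀ n, 0 ≤ b n)
    (hε : ∀ n, 0 < ε n) (hεb : BddAbove (Set.range ε))
    (hρ : ∀ n, 0 ≤ ρ n) (hρb : BddAbove (Set.range ρ))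
    (hratio : Tendsto (fun n => ρ n / ε n) atTop (nhds 0))
    (hdiv : Tendsto (fun N => ∑ n ∈ Finset.range N, ε n) atTop atTop)
    (hrec : ∀ n, 1 ≤ n → a (n + 1) ≤ a n - ε n * b n + ρ n) :
    liminf b atTop = 0 :=
  stmt0_general a b ε ρ ha hb hε hratio hdiv hrec
end

section
/- Let φ_{d,γ} denote the density of the d-dimensional centered Gaussian with covariance γ·I. There exists a constant C < ∞ (depending only on d) such that for all 0 < γ̃ ≤ γ and all z ∈ ℝ^d: |φ_{d,γ}(z) − φ_{d,γ̃}(z)| ≤ C · (γ/γ̃)^{d/2} · ((γ − γ̃)/γ̃) · (1 + ‖z‖²/γ) · φ_{d,γ}(z). -/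
/-!
Writing `δ = (γ - γ̃) / γ̃`, the narrower density is a rescaling of the wider one:
`φ_{d,γ̃}(z) = (γ/γ̃)^{d/2} · exp(-(‖z‖²/2γ) δ) · φ_{d,γ}(z)`. So it suffices to bound
`|1 - R e^{-s}|` with `R = (γ/γ̃)^{d/2} ≥ 1` and `s ≥ 0`: when `R e^{-s} ≤ 1` this is at most
`1 - e^{-s} ≤ s`, otherwise at most `R - 1 ≤ (d/2) R δ`, by `1 - R⁻¹ ≤ log R ≤ (d/2) δ`.
-/

open Real

/-- Density of the `d`-dimensional centered Gaussian distribution with covariance `γ • I`. -/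
noncomputable def gaussDensity (d : ℕ) (γ : ℝ) (z : EuclideanSpace ℝ (Fin d)) : ℝ :=
  (2 * π * γ) ^ (-(d : ℝ) / 2) * Real.exp (-‖z‖ ^ 2 / (2 * γ))

theorem gaussDensity_pos (d : ℕ) {γ : ℝ} (hγ : 0 < γ) (z : EuclideanSpace ℝ (Fin d)) :
    0 < gaussDensity d γ z := by
  unfold gaussDensity
  positivity

theorem gaussDensity_eq_mul_gaussDensity (d : ℕ) {γ γt : ℝ} (hγ : 0 < γ) (hγt : 0 < γt)
    (z : EuclideanSpace ℝ (Fin d)) :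
    gaussDensity d γt z = (γ / γt) ^ ((d : ℝ) / 2) *
      exp (-(‖z‖ ^ 2 / (2 * γ) * ((γ - γt) / γt))) * gaussDensity d γ z := by
  unfold gaussDensity
  have hscale : (2 * π * γt) ^ (-(d : ℝ) / 2) =
      (γ / γt) ^ ((d : ℝ) / 2) * (2 * π * γ) ^ (-(d : ℝ) / 2) := by
    have hflip : (γ / γt) ^ ((d : ℝ) / 2) = (γt / γ) ^ (-(d : ℝ) / 2) := by
      rw [neg_div, rpow_neg (by positivity), ← inv_rpow (by positivity), inv_div]
    rw [hflip, ← mul_rpow (by positivity) (by positivity)]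
    congr 1
    field_simp
  have hexp : -‖z‖ ^ 2 / (2 * γt) =
      -(‖z‖ ^ 2 / (2 * γ) * ((γ - γt) / γt)) + -‖z‖ ^ 2 / (2 * γ) := by
    field_simp
    ring
  rw [hscale, hexp, exp_add]
  ring

theorem rpow_sub_one_le_mul_rpow_mul {x a : ℝ} (hx : 0 < x) (ha : 0 ≤ a) :
    x ^ a - 1 ≤ a * x ^ a * (x - 1) := by
  have hxa : 0 < x ^ a := rpow_pos_of_pos hx a
  have hlog : 1 - (x ^ a)⁻¹ ≤ a * (x - 1) := by
    calc 1 - (x ^ a)⁻¹ ≤ log (x ^ a) := one_sub_inv_le_log_of_pos hxa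
      _ = a * log x := log_rpow hx a
      _ ≤ a * (x - 1) := mul_le_mul_of_nonneg_left (log_le_sub_one_of_pos hx) ha
  calc x ^ a - 1 = x ^ a * (1 - (x ^ a)⁻¹) := by field_simp
    _ ≤ x ^ a * (a * (x - 1)) := mul_le_mul_of_nonneg_left hlog hxa.le
    _ = a * x ^ a * (x - 1) := by ring

theorem abs_one_sub_mul_exp_neg_le {R s : ℝ} (hR : 1 ≤ R) (hs : 0 ≤ s) :
    |1 - R * exp (-s)| ≤ R - 1 + s := by
  have hE : exp (-s) ≤ 1 := exp_le_one_iff.2 (neg_nonpos.2 hs)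
  have h1E : 1 - exp (-s) ≤ s := by linarith [add_one_le_exp (-s)]
  rw [abs_le]
  constructor <;> nlinarith [exp_pos (-s)]

theorem stmt4 (d : ℕ) :
    ∃ C : ℝ, ∀ γ γt : ℝ, 0 < γt → γt ≤ γ → ∀ z : EuclideanSpace ℝ (Fin d),
      |gaussDensity d γ z - gaussDensity d γt z| ≤
        C * (γ / γt) ^ ((d : ℝ) / 2) * ((γ - γt) / γt) * (1 + ‖z‖ ^ 2 / γ) *
          gaussDensity d γ z := by
  refine ⟨(d : ℝ) / 2 + 1, fun γ γt hγt hle z => ?_⟩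
  have hγ : 0 < γ := hγt.trans_le hle
  have hφ := gaussDensity_pos d hγ z
  rw [gaussDensity_eq_mul_gaussDensity d hγ hγt, ← one_sub_mul, abs_mul, abs_of_pos hφ]
  refine mul_le_mul_of_nonneg_right ?_ hφ.le
  set R := (γ / γt) ^ ((d : ℝ) / 2)
  set δ := (γ - γt) / γt
  set u := ‖z‖ ^ 2 / γ
  have hratio : 1 ≤ γ / γt := (one_le_div hγt).2 hle
  have hR : 1 ≤ R := one_le_rpow hratio (by positivity)
  have hδ : 0 ≤ δ := div_nonneg (by linarith) hγt.le
  have hu : 0 ≤ u := by positivity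
  have hRsub : R - 1 ≤ d / 2 * R * δ := by
    have := rpow_sub_one_le_mul_rpow_mul (zero_lt_one.trans_le hratio)
      (by positivity : (0 : ℝ) ≤ d / 2)
    rwa [div_sub_one hγt.ne'] at this
  calc |1 - R * exp (-(‖z‖ ^ 2 / (2 * γ) * δ))|
      ≤ R - 1 + u / 2 * δ := by
        rw [show ‖z‖ ^ 2 / (2 * γ) = u / 2 by ring]
        exact abs_one_sub_mul_exp_neg_le hR (by positivity)
    _ ≤ d / 2 * R * δ + R * δ * u := by nlinarith [mul_nonneg hδ hu]
    _ ≤ (d / 2 + 1) * R * δ * (1 + u) := by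
        nlinarith [mul_nonneg (mul_nonneg hδ hu) (by positivity : (0 : ℝ) ≤ d / 2 * R)]
end

section
/- Let φ_{d,γ} denote the density of the d-dimensional centered Gaussian with covariance γ·I. There exists a constant C < ∞ (depending only on d) such that for all 0 < γ̃ ≤ γ and all z ∈ ℝ^d: |γ^{−1}φ_{d,γ}(z) − γ̃^{−1}φ_{d,γ̃}(z)| ≤ C · (γ/γ̃)^{d/2} · ((γ − γ̃)/γ̃²) · (1 + ‖z‖²/γ) · φ_{d,γ}(z). -/
/-!
Up to the factor `(2π)^(-d/2)`, `s ↦ s⁻¹ φ_{d,s}(z)` is `f(s) = s^a e^{-b/s}` with `a = -d/2 - 1`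
and `b = ‖z‖²/2`, whose derivative is `s^(a-1) e^{-b/s} (a + b/s)`. On `[γ̃, γ]` the power is at most
`γ̃^(a-1)`, and since `x e^{-x}` is controlled by `(1 + y) e^{-y}` for `0 ≤ y ≤ x`, the remaining
factor is at most `(1 - a + b/γ) e^{-b/γ}`. The mean value inequality then gives the bound, and
`γ̃^(a-1) e^{-b/γ}` is exactly `(γ/γ̃)^(d/2) γ̃⁻² (2π)^(d/2) φ_{d,γ}(z)`.
-/

open Real

open Set

lemma mul_exp_neg_le_one_add_mul_exp_neg {u v : ℝ} (hv : 0 ≤ v) (hvu : v ≤ u) :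
    u * exp (-u) ≤ (1 + v) * exp (-v) := by
  have hdiff : (u - v) * exp (-(u - v)) ≤ 1 :=
    (mul_exp_neg_le_exp_neg_one _).trans (exp_le_one_iff.mpr (by norm_num))
  have hdecay : exp (-(u - v)) ≤ 1 := exp_le_one_iff.mpr (by linarith)
  have hsplit : exp (-u) = exp (-(u - v)) * exp (-v) := by rw [← exp_add]; ring_nf
  calc u * exp (-u) = ((u - v) * exp (-(u - v)) + v * exp (-(u - v))) * exp (-v) := by
        rw [hsplit]; ring
    _ ≤ (1 + v * 1) * exp (-v) := by gcongr
    _ = (1 + v) * exp (-v) := by ring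

lemma hasDerivAt_rpow_mul_exp_neg_div (a b : ℝ) {s : ℝ} (hs : 0 < s) :
    HasDerivAt (fun x => x ^ a * exp (-b / x)) (s ^ (a - 1) * exp (-b / s) * (a + b / s)) s := by
  have hinner : HasDerivAt (fun x => -b / x) (b / s ^ 2) s := by
    simpa [div_eq_mul_inv, mul_comm] using (hasDerivAt_inv hs.ne').const_mul (-b)
  refine ((hasDerivAt_rpow_const (p := a) (Or.inl hs.ne')).mul hinner.exp).congr_deriv ?_
  rw [rpow_sub_one hs.ne']
  field_simp

lemma abs_rpow_sub_one_mul_exp_neg_div_mul_le {a b s t u : ℝ} (ha : a ≤ 0) (hb : 0 ≤ b)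
    (ht : 0 < t) (hts : t ≤ s) (hsu : s ≤ u) :
    |s ^ (a - 1) * exp (-b / s) * (a + b / s)| ≤ t ^ (a - 1) * exp (-b / u) * (1 - a + b / u) := by
  have hs : 0 < s := ht.trans_le hts
  have hu : 0 < u := hs.trans_le hsu
  have hbs : 0 ≤ b / s := div_nonneg hb hs.le
  have hpow : s ^ (a - 1) ≤ t ^ (a - 1) := rpow_le_rpow_of_nonpos ht hts (by linarith)
  have hexp : exp (-(b / s)) ≤ exp (-(b / u)) := by gcongr
  have hmul : b / s * exp (-(b / s)) ≤ (1 + b / u) * exp (-(b / u)) :=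
    mul_exp_neg_le_one_add_mul_exp_neg (by positivity) (by gcongr)
  have hfactor : |a + b / s| ≤ -a + b / s := abs_le.mpr ⟨by linarith, by linarith⟩
  rw [abs_mul, abs_mul, abs_of_pos (rpow_pos_of_pos hs _), abs_of_pos (exp_pos _)]
  calc s ^ (a - 1) * exp (-b / s) * |a + b / s|
      ≤ t ^ (a - 1) * (exp (-(b / s)) * (-a + b / s)) := by
        rw [mul_assoc, neg_div]; gcongr
    _ ≤ t ^ (a - 1) * (exp (-(b / u)) * (1 - a + b / u)) := by
        gcongr ?_ * ?_
        nlinarith [mul_le_mul_of_nonneg_left hexp (neg_nonneg.mpr ha)]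
    _ = t ^ (a - 1) * exp (-b / u) * (1 - a + b / u) := by rw [neg_div]; ring

lemma abs_rpow_mul_exp_neg_div_sub_le {a b t u : ℝ} (ha : a ≤ 0) (hb : 0 ≤ b)
    (ht : 0 < t) (htu : t ≤ u) :
    |u ^ a * exp (-b / u) - t ^ a * exp (-b / t)| ≤
      t ^ (a - 1) * exp (-b / u) * (1 - a + b / u) * (u - t) := by
  have hmvt := (convex_Icc t u).norm_image_sub_le_of_norm_hasDerivWithin_le
    (fun s hs => (hasDerivAt_rpow_mul_exp_neg_div a b (ht.trans_le hs.1)).hasDerivWithinAt)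
    (fun s hs => abs_rpow_sub_one_mul_exp_neg_div_mul_le ha hb ht hs.1 hs.2)
    (left_mem_Icc.mpr htu) (right_mem_Icc.mpr htu)
  rwa [Real.norm_eq_abs, Real.norm_eq_abs, abs_of_nonneg (sub_nonneg.mpr htu)] at hmvt

lemma gaussDensity_eq (d : ℕ) {s : ℝ} (hs : 0 < s) (z : EuclideanSpace ℝ (Fin d)) :
    gaussDensity d s z =
      (2 * π) ^ (-((d : ℝ) / 2)) * s ^ (-((d : ℝ) / 2)) * exp (-(‖z‖ ^ 2 / 2) / s) := by
  rw [gaussDensity, neg_div, mul_rpow (by positivity) hs.le]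
  congr 2
  ring

lemma inv_mul_gaussDensity (d : ℕ) {s : ℝ} (hs : 0 < s) (z : EuclideanSpace ℝ (Fin d)) :
    s⁻¹ * gaussDensity d s z =
      (2 * π) ^ (-((d : ℝ) / 2)) * (s ^ (-((d : ℝ) / 2) - 1) * exp (-(‖z‖ ^ 2 / 2) / s)) := by
  rw [gaussDensity_eq d hs, rpow_sub_one hs.ne']
  ring

theorem stmt5 (d : ℕ) :
    ∃ C : ℝ, ∀ γ γt : ℝ, 0 < γt → γt ≤ γ → ∀ z : EuclideanSpace ℝ (Fin d),
      |γ⁻¹ * gaussDensity d γ z - γt⁻¹ * gaussDensity d γt z| ≤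
        C * (γ / γt) ^ ((d : ℝ) / 2) * ((γ - γt) / γt ^ 2) * (1 + ‖z‖ ^ 2 / γ) *
          gaussDensity d γ z := by
  refine ⟨(d : ℝ) / 2 + 2, fun γ γt hγt hle z => ?_⟩
  have hγ : 0 < γ := hγt.trans_le hle
  rw [inv_mul_gaussDensity d hγ, inv_mul_gaussDensity d hγt, ← mul_sub, abs_mul,
    abs_of_pos (by positivity), gaussDensity_eq d hγ]
  set p : ℝ := (d : ℝ) / 2
  set b : ℝ := ‖z‖ ^ 2 / 2
  have hp : 0 ≤ p := by positivity
  have hmvt := abs_rpow_mul_exp_neg_div_sub_le (a := -p - 1) (b := b) (by linarith) (by positivity)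
    hγt hle
  have hpow : γt ^ (-p - 1 - 1) = (γ / γt) ^ p / γt ^ 2 * γ ^ (-p) := by
    rw [div_rpow hγ.le hγt.le, rpow_neg hγ.le, rpow_sub hγt, rpow_sub hγt, rpow_neg hγt.le, rpow_one]
    field_simp
  have hcoef : 1 - (-p - 1) + b / γ ≤ (p + 2) * (1 + ‖z‖ ^ 2 / γ) := by
    have : 0 ≤ ‖z‖ ^ 2 / γ := by positivity
    have : b / γ = ‖z‖ ^ 2 / γ / 2 := by ring
    nlinarith
  calc (2 * π) ^ (-p) * |γ ^ (-p - 1) * exp (-b / γ) - γt ^ (-p - 1) * exp (-b / γt)|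
      ≤ (2 * π) ^ (-p) * (γt ^ (-p - 1 - 1) * exp (-b / γ) * (1 - (-p - 1) + b / γ) * (γ - γt)) :=
        mul_le_mul_of_nonneg_left hmvt (by positivity)
    _ = (1 - (-p - 1) + b / γ) *
          ((γ / γt) ^ p * ((γ - γt) / γt ^ 2) * ((2 * π) ^ (-p) * γ ^ (-p) * exp (-b / γ))) := by
        rw [hpow]; ring
    _ ≤ (p + 2) * (1 + ‖z‖ ^ 2 / γ) *
          ((γ / γt) ^ p * ((γ - γt) / γt ^ 2) * ((2 * π) ^ (-p) * γ ^ (-p) * exp (-b / γ))) := by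
        gcongr
    _ = _ := by ring
end

section
/- Suppose a sequence of differentiable functions f_n : ℝ^d → ℝ epi-converges to a function f that is locally integrable, lower bounded, and lower semicontinuous. Then for every local minimizer θ* of f there exists a sequence (θ_k) in ℝ^d with θ_k → θ* and ‖∇f_k(θ_k)‖ → 0. -/
/-!
Let `θs` be a recovery sequence for `θstar` and let `x n` minimize the penalized function
`fn n + ‖· - θs n‖ ^ 2` on a small closed ball around `θstar`. At an interior minimizer
`∇ (fn n) (x n) = -2 (x n - θs n)`, so it suffices that `‖x n - θs n‖ → 0`. Otherwise, along a
subsequence, `fn n (x n) ≤ f θstar - ε ^ 2 / 2` and `x n → z` in the ball; the liminf half of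
epi-convergence survives passing to subsequences, so `f z < f θstar`, contradicting minimality.
-/

open MeasureTheory Filter Topology InnerProductSpace

theorem StrictMono.tendsto_extend {X : Type*} {φ : ℕ → ℕ} (hφ : StrictMono φ) {u v : ℕ → X}
    {l : Filter X} (hu : Tendsto u atTop l) (hv : Tendsto v atTop l) :
    Tendsto (Function.extend φ u v) atTop l := by
  intro s hs
  rw [mem_map]
  obtain ⟨K, hK⟩ := eventually_atTop.1 (hu hs)
  obtain ⟨N, hN⟩ := eventually_atTop.1 (hv hs)
  filter_upwards [eventually_ge_atTop (max N (φ K))] with n hn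
  by_cases h : ∃ k, φ k = n
  · obtain ⟨k, rfl⟩ := h
    rw [Set.mem_preimage, hφ.injective.extend_apply]
    exact hK k (hφ.le_iff_le.1 (le_of_max_le_right hn))
  · rw [Set.mem_preimage, Function.extend_apply' _ _ _ h]
    exact hN n (le_of_max_le_left hn)

theorem tendsto_of_mem_segment {ι E : Type*} [SeminormedAddCommGroup E] [NormedSpace ℝ E]
    {l : Filter ι} {a b w : ι → E} {z : E} (ha : Tendsto a l (𝓝 z)) (hb : Tendsto b l (𝓝 z))
    (hw : ∀ i, w i ∈ segment ℝ (a i) (b i)) : Tendsto w l (𝓝 z) := by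
  rw [tendsto_iff_dist_tendsto_zero] at ha hb ⊢
  refine squeeze_zero (fun _ => dist_nonneg) (fun i => ?_) (by simpa using ha.max hb)
  exact (convex_closedBall z _).segment_subset (Metric.mem_closedBall.2 (le_max_left _ _))
    (Metric.mem_closedBall.2 (le_max_right _ _)) (hw i)

theorem exists_mem_segment_eq_min {E : Type*} [AddCommGroup E] [Module ℝ E] [TopologicalSpace E]
    [IsTopologicalAddGroup E] [ContinuousSMul ℝ E] {g : E → ℝ} (hg : Continuous g) (a : E)
    {b : E} {c : ℝ} (hb : g b ≤ c) : ∃ w ∈ segment ℝ a b, g w = min c (g a) := by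
  rcases le_total c (g a) with hca | hac
  · rw [min_eq_left hca]
    exact (convex_segment a b).isPreconnected.intermediate_value (right_mem_segment ℝ a b)
      (left_mem_segment ℝ a b) hg.continuousOn ⟨hb, hca⟩
  · exact ⟨a, left_mem_segment ℝ a b, (min_eq_right hac).symm⟩

theorem gradient_eq_of_isLocalMin_add_norm_sub_sq {F : Type*} [NormedAddCommGroup F]
    [InnerProductSpace ℝ F] [CompleteSpace F] {h : F → ℝ} {a x : F}
    (hh : DifferentiableAt ℝ h x) (hmin : IsLocalMin (fun y => h y + ‖y - a‖ ^ 2) x) :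
    gradient h x = (-2 : ℝ) • (x - a) := by
  have hsum := hh.hasFDerivAt.add ((hasFDerivAt_id x).sub_const a).norm_sq
  have hzero := hsum.fderiv.symm.trans hmin.fderiv_eq_zero
  rw [gradient, eq_neg_of_add_eq_zero_left hzero]
  apply (toDual ℝ F).injective
  ext v
  simp

def EpiConverges {E : Type*} [TopologicalSpace E] (fn : ℕ → E → ℝ) (f : E → ℝ) : Prop :=
  (∀ (θ : E) (θs : ℕ → E), Tendsto θs atTop (𝓝 θ) →
      f θ ≤ liminf (fun n => fn n (θs n)) atTop) ∧
    ∀ θ : E, ∃ θs : ℕ → E, Tendsto θs atTop (𝓝 θ) ∧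
      Tendsto (fun n => fn n (θs n)) atTop (𝓝 (f θ))

section

variable {E : Type*} [NormedAddCommGroup E] [NormedSpace ℝ E] {fn : ℕ → E → ℝ} {f : E → ℝ}

theorem EpiConverges.le_of_subseq (h : EpiConverges fn f) (hcont : ∀ n, Continuous (fn n))
    {φ : ℕ → ℕ} (hφ : StrictMono φ) {x : ℕ → E} {z : E} (hx : Tendsto x atTop (𝓝 z))
    {B : ℝ} (hB : ∀ k, fn (φ k) (x k) ≤ B) : f z ≤ B := by
  by_contra! hBz
  obtain ⟨θs, hθs, hval⟩ := h.2 z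
  obtain ⟨c, hBc, hcz⟩ := exists_between hBz
  -- Fill the gaps of `φ` with a recovery sequence of `z`. On `φ`, slide from `θs` towards `x`
  -- until the value drops to `min c _`: this keeps the merged sequence bounded below, without
  -- which its real `liminf` would be a junk value.
  choose w hwseg hwval using fun k =>
    exists_mem_segment_eq_min (hcont (φ k)) (θs (φ k)) ((hB k).trans hBc.le)
  set y := Function.extend φ w θs with hy_def
  have hy : Tendsto y atTop (𝓝 z) :=
    hφ.tendsto_extend (tendsto_of_mem_segment (hθs.comp hφ.tendsto_atTop) hx hwseg) hθs
  have hyφ (k : ℕ) : fn (φ k) (y (φ k)) = min c (fn (φ k) (θs (φ k))) := by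
    rw [hy_def, hφ.injective.extend_apply, hwval]
  have hlow (n : ℕ) : min c (fn n (θs n)) ≤ fn n (y n) := by
    by_cases hn : ∃ k, φ k = n
    · obtain ⟨k, rfl⟩ := hn
      exact (hyφ k).ge
    · rw [hy_def, Function.extend_apply' _ _ _ hn]
      exact min_le_right _ _
  have hev : ∀ᶠ n in atTop, c ≤ fn n (y n) := by
    filter_upwards [hval.eventually (eventually_gt_nhds hcz)] with n hn
    simpa [min_eq_left hn.le] using hlow n
  have hfreq : ∃ᶠ n in atTop, fn n (y n) ≤ c :=
    hφ.tendsto_atTop.frequently (Frequently.of_forall fun k => (hyφ k).trans_le (min_le_left _ _))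
  have hliminf := liminf_le_of_frequently_le hfreq ⟨c, eventually_map.2 hev⟩
  linarith [h.1 z y hy]

theorem EpiConverges.tendsto_norm_sub_of_isMinOn (h : EpiConverges fn f)
    (hcont : ∀ n, Continuous (fn n)) {K : Set E} (hK : IsCompact K) {θ : E}
    (hθ : ∀ z ∈ K, f θ ≤ f z) {θs : ℕ → E} (hθsK : ∀ᶠ n in atTop, θs n ∈ K)
    (hval : Tendsto (fun n => fn n (θs n)) atTop (𝓝 (f θ))) {x : ℕ → E} (hxK : ∀ n, x n ∈ K)
    (hxmin : ∀ n, IsMinOn (fun y => fn n y + ‖y - θs n‖ ^ 2) K (x n)) :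
    Tendsto (fun n => ‖x n - θs n‖) atTop (𝓝 0) := by
  rw [Metric.tendsto_nhds]
  intro ε hε
  by_contra hfar
  rw [not_eventually] at hfar
  have hgood : ∀ᶠ n in atTop, θs n ∈ K ∧ fn n (θs n) < f θ + ε ^ 2 / 2 :=
    hθsK.and (hval.eventually (eventually_lt_nhds (by linarith [pow_pos hε 2])))
  obtain ⟨φ, hφ, hφgood⟩ := extraction_of_frequently_atTop (hfar.and_eventually hgood)
  obtain ⟨z, hzK, ψ, hψ, hxz⟩ := hK.tendsto_subseq fun k => hxK (φ k)
  have hB (k : ℕ) : fn (φ (ψ k)) (x (φ (ψ k))) ≤ f θ - ε ^ 2 / 2 := by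
    obtain ⟨hfar_k, hθsK_k, hval_k⟩ := hφgood (ψ k)
    have hpen := hxmin (φ (ψ k)) hθsK_k
    simp only [Real.dist_eq, sub_zero, abs_norm, not_lt] at hfar_k
    simp only [Set.mem_ofPred_eq, sub_self, norm_zero] at hpen
    nlinarith [pow_le_pow_left₀ hε.le hfar_k 2]
  linarith [pow_pos hε 2, hθ z hzK, h.le_of_subseq hcont (hφ.comp hψ) hxz hB]

end

theorem stmt16_general {d : ℕ} (f : EuclideanSpace ℝ (Fin d) → ℝ)
    (fn : ℕ → EuclideanSpace ℝ (Fin d) → ℝ)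
    (hdiff : ∀ n, Differentiable ℝ (fn n))
    (hepi1 : ∀ (θ : EuclideanSpace ℝ (Fin d)) (θs : ℕ → EuclideanSpace ℝ (Fin d)),
      Tendsto θs atTop (nhds θ) → f θ ≤ liminf (fun n => fn n (θs n)) atTop)
    (hepi2 : ∀ θ : EuclideanSpace ℝ (Fin d), ∃ θs : ℕ → EuclideanSpace ℝ (Fin d),
      Tendsto θs atTop (nhds θ) ∧ Tendsto (fun n => fn n (θs n)) atTop (nhds (f θ)))
    (θstar : EuclideanSpace ℝ (Fin d)) (hmin : IsLocalMin f θstar) :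
    ∃ θk : ℕ → EuclideanSpace ℝ (Fin d), Tendsto θk atTop (nhds θstar) ∧
      Tendsto (fun k => ‖gradient (fn k) (θk k)‖) atTop (nhds 0) := by
  obtain ⟨r, hr, hball⟩ := Metric.eventually_nhds_iff.1 hmin
  have hr2 : 0 < r / 2 := half_pos hr
  have hcont (n : ℕ) : Continuous (fn n) := (hdiff n).continuous
  obtain ⟨θs, hθs, hval⟩ := hepi2 θstar
  choose x hxK hxmin using fun n =>
    (isCompact_closedBall θstar (r / 2)).exists_isMinOn (Metric.nonempty_closedBall.2 hr2.le)
      ((hcont n).add ((continuous_id.sub continuous_const).norm.pow 2)).continuousOn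
  have hdist : Tendsto (fun n => ‖x n - θs n‖) atTop (𝓝 0) :=
    EpiConverges.tendsto_norm_sub_of_isMinOn ⟨hepi1, hepi2⟩ hcont (isCompact_closedBall _ _)
      (fun z hz => hball ((Metric.mem_closedBall.1 hz).trans_lt (half_lt_self hr)))
      (hθs.eventually (Metric.closedBall_mem_nhds _ hr2)) hval hxK hxmin
  have hx : Tendsto x atTop (𝓝 θstar) := by
    simpa using (tendsto_zero_iff_norm_tendsto_zero.2 hdist).add hθs
  have hgrad : ∀ᶠ n in atTop, 2 * ‖x n - θs n‖ = ‖gradient (fn n) (x n)‖ := by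
    filter_upwards [hx.eventually (Metric.ball_mem_nhds θstar hr2)] with n hn
    rw [gradient_eq_of_isLocalMin_add_norm_sub_sq (hdiff n).differentiableAt
      ((hxmin n).isLocalMin (Metric.closedBall_mem_nhds_of_mem hn)), norm_smul]
    norm_num
  exact ⟨x, hx, by simpa using (hdist.const_mul 2).congr' hgrad⟩

theorem stmt16 {d : ℕ} (f : EuclideanSpace ℝ (Fin d) → ℝ)
    (fn : ℕ → EuclideanSpace ℝ (Fin d) → ℝ)
    (hdiff : ∀ n, Differentiable ℝ (fn n))
    (hloc : LocallyIntegrable f)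
    (hbdd : BddBelow (Set.range f))
    (hlsc : LowerSemicontinuous f)
    (hepi1 : ∀ (θ : EuclideanSpace ℝ (Fin d)) (θs : ℕ → EuclideanSpace ℝ (Fin d)),
      Tendsto θs atTop (nhds θ) → f θ ≤ liminf (fun n => fn n (θs n)) atTop)
    (hepi2 : ∀ θ : EuclideanSpace ℝ (Fin d), ∃ θs : ℕ → EuclideanSpace ℝ (Fin d),
      Tendsto θs atTop (nhds θ) ∧ Tendsto (fun n => fn n (θs n)) atTop (nhds (f θ)))
    (θstar : EuclideanSpace ℝ (Fin d)) (hmin : IsLocalMin f θstar) :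
    ∃ θk : ℕ → EuclideanSpace ℝ (Fin d), Tendsto θk atTop (nhds θstar) ∧
      Tendsto (fun k => ‖gradient (fn k) (θk k)‖) atTop (nhds 0) :=
  stmt16_general f fn hdiff hepi1 hepi2 θstar hmin
end
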